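/- In Blocksworld with features H and n(x), the policy π given by rules {¬H, n(x)>0 → ⟨¬H,n(x)>0; H,n(x)↓⟩} and {H, n(x)>0 → ⟨H; ¬H⟩}, where the second abstract action is instantiated only by actions that do not place a block above x, solves every clear(x) instance in which the gripper is initially empty: every trajectory induced by π terminates in a state where n(x) = 0, after at most 2·n(x)(s₀) steps. -/

import Mathlib

inductive Loc (B : Type)
  | table
  | on (b : B)
  | held
deriving DecidableEq

/-- A Blocksworld state: the location of each block (table, on a block, or held). -/
abbrev BWState (B : Type) := B → Loc B

/-- Block `a` is (strictly) above block `x`. -/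
def Above {B : Type} (s : BWState B) (a x : B) : Prop :=
  Relation.TransGen (fun u v => s u = Loc.on v) a x

/-- n(x): number of blocks above x. -/
noncomputable def nAbove {B : Type} (s : BWState B) (x : B) : ℕ :=
  {b | Above s b x}.ncard

/-- H: some block is held by the gripper. -/
def Held {B : Type} (s : BWState B) : Prop := ∃ b, s b = Loc.held

inductive BWAct (B : Type)
  | unstack (a c : B)
  | pickup (a : B)
  | putdown (a : B)
  | stack (a c : B)

def clearTop {B : Type} (s : BWState B) (a : B) : Prop := ∀ c, s c ≠ Loc.on a

def bwApp {B : Type} (s : BWState B) : BWAct B → Prop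
  | .unstack a c => s a = Loc.on c ∧ clearTop s a ∧ ¬ Held s
  | .pickup a => s a = Loc.table ∧ clearTop s a ∧ ¬ Held s
  | .putdown a => s a = Loc.held
  | .stack a c => s a = Loc.held ∧ clearTop s c ∧ a ≠ c

def bwSucc {B : Type} [DecidableEq B] (s : BWState B) : BWAct B → BWState B
  | .unstack a _ => Function.update s a Loc.held
  | .pickup a => Function.update s a Loc.held
  | .putdown a => Function.update s a Loc.table
  | .stack a c => Function.update s a (Loc.on c)

/-- Initial states: gripper empty, blocks form towers (the `on` relation is acyclic). -/
def InitBW {B : Type} (s : BWState B) : Prop := ¬ Held s ∧ ∀ b, ¬ Above s b b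

def ReachBW {B : Type} [DecidableEq B] (s : BWState B) : Prop :=
  ∃ s₀, InitBW s₀ ∧
    Relation.ReflTransGen (fun u v => ∃ a, bwApp u a ∧ v = bwSucc u a) s₀ s

/-! While `n(x) > 0`, each step of the policy either picks up a block (`n(x)` drops by one, `H`
becomes true) or puts the held block away (`H` becomes false), so `2·n(x) + [H]` drops at every
step; starting from `2·n(x)(s₀)` with the gripper empty, `n(x) = 0` must be reached within that
many steps. -/

theorem exists_le_not_of_lt_while {m : ℕ → ℕ} {p : ℕ → Prop} (h : ∀ i, p i → m (i + 1) < m i) :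
    ∃ N ≤ m 0, ¬ p N := by
  by_contra! hp
  have hbound : ∀ k ≤ m 0 + 1, m k + k ≤ m 0 := by
    intro k
    induction k with
    | zero => simp
    | succ k ih =>
      intro hk
      have := h k (hp k (by omega))
      have := ih (by omega)
      omega
  have := hbound (m 0 + 1) le_rfl
  omega

section PolicyMeasure

variable {B : Type} {s t : BWState B} {x : B}

open Classical in
noncomputable def policyMeasure (s : BWState B) (x : B) : ℕ :=
  2 * nAbove s x + if Held s then 1 else 0

theorem policyMeasure_of_not_held (hs : ¬ Held s) : policyMeasure s x = 2 * nAbove s x := by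
  simp [policyMeasure, hs]

theorem policyMeasure_lt (hpick : ¬ Held s → Held t ∧ nAbove t x + 1 = nAbove s x)
    (hput : Held s → ¬ Held t ∧ nAbove t x = nAbove s x) :
    policyMeasure t x < policyMeasure s x := by
  by_cases hs : Held s
  · obtain ⟨ht, hn⟩ := hput hs
    simp [policyMeasure, hs, ht, hn]
  · obtain ⟨ht, hn⟩ := hpick hs
    simp only [policyMeasure, hs, ht, if_true, if_false]
    omega

end PolicyMeasure

theorem stmt14_general {B : Type} [DecidableEq B] (x : B)
    (s : ℕ → BWState B) (h0 : InitBW (s 0))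
    (hstep : ∀ i, 0 < nAbove (s i) x →
      ∃ act, bwApp (s i) act ∧ s (i+1) = bwSucc (s i) act ∧
        (¬ Held (s i) →
          Held (s (i+1)) ∧ nAbove (s (i+1)) x + 1 = nAbove (s i) x) ∧
        (Held (s i) →
          ¬ Held (s (i+1)) ∧ nAbove (s (i+1)) x = nAbove (s i) x)) :
    ∃ N ≤ 2 * nAbove (s 0) x, nAbove (s N) x = 0 := by
  obtain ⟨N, hN, hstopped⟩ := exists_le_not_of_lt_while
    (m := fun i => policyMeasure (s i) x) (p := fun i => 0 < nAbove (s i) x)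
    fun i hi => by
      obtain ⟨-, -, -, hpick, hput⟩ := hstep i hi
      exact policyMeasure_lt hpick hput
  rw [policyMeasure_of_not_held h0.1] at hN
  exact ⟨N, hN, Nat.eq_zero_of_not_pos hstopped⟩

/-- The policy that, while n(x)>0, unstacks the topmost block above x
when the gripper is empty (decreasing n(x) by 1 and making H true) and otherwise puts
the held block away, not above x (making H false and leaving n(x) unchanged), solves
every clear(x) instance with the gripper initially empty: every induced trajectory
reaches n(x) = 0 after at most 2·n(x)(s₀) steps. -/
theorem stmt14 {B : Type} [DecidableEq B] [Fintype B] (x : B)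
    (s : ℕ → BWState B) (h0 : InitBW (s 0))
    (hstep : ∀ i, 0 < nAbove (s i) x →
      ∃ act, bwApp (s i) act ∧ s (i+1) = bwSucc (s i) act ∧
        (¬ Held (s i) →
          Held (s (i+1)) ∧ nAbove (s (i+1)) x + 1 = nAbove (s i) x) ∧
        (Held (s i) →
          ¬ Held (s (i+1)) ∧ nAbove (s (i+1)) x = nAbove (s i) x))
    (hstop : ∀ i, nAbove (s i) x = 0 → s (i+1) = s i) :
    ∃ N ≤ 2 * nAbove (s 0) x, nAbove (s N) x = 0 :=
  stmt14_general x s h0 hstep
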